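/- Let W have basis {ψ̃_m : m ∈ ℤ} with operators Â ψ̃_m = m ψ̃_m, Ĉ₊ ψ̃_m = (m − 1/2) ψ̃_{m+1}, Ĉ₋ ψ̃_m = (m + 1/2) ψ̃_{m−1}. Then there is no inner product on W in which Â is self-adjoint and Ĉ₊† = Ĉ₋. -/
import Mathlib


open scoped BigOperators

/-- The operator Â on W = span{ψ̃_m : m ∈ ℤ} (realised as ℤ →₀ ℂ),
Â ψ̃_m = m ψ̃_m. -/
noncomputable def Aop : (ℤ →₀ ℂ) →ₗ[ℂ] (ℤ →₀ ℂ) :=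
  Finsupp.lsum ℂ fun m : ℤ => (m : ℂ) • Finsupp.lsingle m

/-- Ĉ₊ ψ̃_m = (m − 1/2) ψ̃_{m+1}. -/
noncomputable def Cp : (ℤ →₀ ℂ) →ₗ[ℂ] (ℤ →₀ ℂ) :=
  Finsupp.lsum ℂ fun m : ℤ => ((m : ℂ) - 1/2) • Finsupp.lsingle (m + 1)

/-- Ĉ₋ ψ̃_m = (m + 1/2) ψ̃_{m−1}. -/
noncomputable def Cm : (ℤ →₀ ℂ) →ₗ[ℂ] (ℤ →₀ ℂ) :=
  Finsupp.lsum ℂ fun m : ℤ => ((m : ℂ) + 1/2) • Finsupp.lsingle (m - 1)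

/-- B is a (positive definite Hermitian sesquilinear) inner product on W. -/
def IsInnerProduct (B : (ℤ →₀ ℂ) → (ℤ →₀ ℂ) → ℂ) : Prop :=
  (∀ x y z, B (x + y) z = B x z + B y z) ∧
  (∀ x y z, B x (y + z) = B x y + B x z) ∧
  (∀ (c : ℂ) x y, B (c • x) y = (starRingEnd ℂ) c * B x y) ∧
  (∀ (c : ℂ) x y, B x (c • y) = c * B x y) ∧
  (∀ x y, B x y = (starRingEnd ℂ) (B y x)) ∧
  (∀ x, x ≠ 0 → 0 < (B x x).re)

lemma Cp_single0 : Cp (Finsupp.single 0 (1 : ℂ)) = (-(1/2) : ℂ) • Finsupp.single 1 1 := by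
  simp only [Cp, Finsupp.lsum_single, LinearMap.smul_apply, Finsupp.lsingle_apply,
    Finsupp.smul_single]
  norm_num

lemma Cm_single1 : Cm (Finsupp.single 1 (1 : ℂ)) = ((3/2) : ℂ) • Finsupp.single 0 1 := by
  simp only [Cm, Finsupp.lsum_single, LinearMap.smul_apply, Finsupp.lsingle_apply,
    Finsupp.smul_single]
  norm_num

/-- There is no inner product on W in which Â is self-adjoint and Ĉ₊† = Ĉ₋. -/
theorem no_inner_product :
    ¬ ∃ B : (ℤ →₀ ℂ) → (ℤ →₀ ℂ) → ℂ, IsInnerProduct B ∧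
      (∀ x y, B (Aop x) y = B x (Aop y)) ∧
      (∀ x y, B (Cp x) y = B x (Cm y)) := by
  rintro ⟨B, ⟨_, _, hl, hr, _, hpos⟩, _, hC⟩
  have h := hC (Finsupp.single 0 1) (Finsupp.single 1 1)
  rw [Cp_single0, Cm_single1, hl, hr] at h
  have hc : (starRingEnd ℂ) (-(1/2)) = -(1/2) := by simp [Complex.ext_iff]
  rw [hc] at h
  have h0 : 0 < (B (Finsupp.single 0 1) (Finsupp.single 0 1)).re :=
    hpos _ (by simp only [ne_eq, Finsupp.single_eq_zero]; norm_num)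
  have h1 : 0 < (B (Finsupp.single 1 1) (Finsupp.single 1 1)).re :=
    hpos _ (by simp only [ne_eq, Finsupp.single_eq_zero]; norm_num)
  have hre := congrArg Complex.re h
  rw [Complex.mul_re, Complex.mul_re] at hre
  have : (-(1/2) : ℂ).re = -(1/2) := by norm_num [Complex.ext_iff]
  have him : (-(1/2) : ℂ).im = 0 := by norm_num [Complex.ext_iff]
  have h32 : ((3/2 : ℂ)).re = 3/2 := by norm_num [Complex.ext_iff]
  have h32i : ((3/2 : ℂ)).im = 0 := by norm_num [Complex.ext_iff]
  rw [this, him, h32, h32i] at hre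
  nlinarith
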